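/- arXiv:math/0109074 — 3 statements merged into one kernel-verified Lean document; each statement's English description precedes it below -/
import Mathlib

section
/- Let P be an n×n nonnegative matrix and b a nonnegative vector. Then the local spectral radius ρ_b(P) equals the maximum of ρ(P_{αα}) over all classes α of P having access to supp(b). -/
/-!
Upper bound: the vertices with access to `supp b` form a set `S` closed under predecessors, so
`P^m b = P_S^m b`. Removing from `S` a class `T` with no edges into `S \ T` (one exists, access
being a preorder on a finite set) leaves `P_S = P_{S \ T} + P_{S × T}` block triangular: its
powers expand as `∑_{p+q=m} P_{S \ T}^p P_{S × T}^q` with `P_{S × T}^(q+1) = P_{S × T} P_T^q`.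
By induction on `S`, `‖P_S^m‖` thus grows no faster than the largest class radius in `S`, the
`m + 1` summands costing only a polynomial factor.

Lower bound: if the class `α` of `i` has access to `j` with `b_j > 0`, every `c ∈ α` has
`(P^k b)_c > 0` for some `k`, and `(P_{αα}^m)_{ac} (P^k b)_c ≤ (P^(m+k) b)_a`.

Both halves are phrased through `GrowsAtMost f L` (`f m ≤ C (L + ε)^m` eventually, for every
`ε > 0`), which under an a priori exponential bound is equivalent to `growthRate f ≤ L`.
-/

open Filter Matrix
open scoped Topology Classical

attribute [local instance] Matrix.linftyOpNormedAddCommGroup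

/-- The local spectral radius of `P` at `b`, defined as `limsup ‖P^m b‖^(1/m)`. -/
noncomputable def localRho {n : ℕ} (A : Matrix (Fin n) (Fin n) ℝ) (b : Fin n → ℝ) : ℝ :=
  limsup (fun m : ℕ => ‖(A ^ m).mulVec b‖ ^ ((1 : ℝ) / m)) atTop

/-- The spectral radius of a real matrix, via Gelfand's formula. -/
noncomputable def rho {n : ℕ} (A : Matrix (Fin n) (Fin n) ℝ) : ℝ :=
  limsup (fun m : ℕ => ‖A ^ m‖ ^ ((1 : ℝ) / m)) atTop

/-- `i` has access to `j` in the directed graph of `P` (edges where `P a b > 0`). -/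
def Access {n : ℕ} (P : Matrix (Fin n) (Fin n) ℝ) (i j : Fin n) : Prop :=
  Relation.ReflTransGen (fun a b => 0 < P a b) i j

/-- The matrix obtained from `P` by zeroing all entries outside `α × α`, where `α` is the
class (strongly connected component) of the vertex `i`; its spectral radius is `ρ(P_{αα})`. -/
noncomputable def classMatrix {n : ℕ} (P : Matrix (Fin n) (Fin n) ℝ) (i : Fin n) :
    Matrix (Fin n) (Fin n) ℝ :=
  fun a b =>
    if (Access P i a ∧ Access P a i) ∧ (Access P i b ∧ Access P b i) then P a b else 0

noncomputable def growthRate (f : ℕ → ℝ) : ℝ :=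
  limsup (fun m : ℕ => f m ^ ((1 : ℝ) / m)) atTop

def GrowsAtMost (f : ℕ → ℝ) (L : ℝ) : Prop :=
  ∀ ε > 0, ∃ C, ∀ᶠ m in atTop, f m ≤ C * (L + ε) ^ m

namespace GrowsAtMost

variable {f g : ℕ → ℝ} {L : ℝ}

lemma zero : GrowsAtMost (fun _ => 0) L :=
  fun _ _ => ⟨0, Eventually.of_forall fun _ => by rw [zero_mul]⟩

lemma mono (hg : GrowsAtMost g L) (hfg : ∀ᶠ m in atTop, f m ≤ g m) : GrowsAtMost f L := by
  intro ε hε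
  obtain ⟨C, hC⟩ := hg ε hε
  exact ⟨C, (hfg.and hC).mono fun m h => h.1.trans h.2⟩

lemma add (hf : GrowsAtMost f L) (hg : GrowsAtMost g L) :
    GrowsAtMost (fun m => f m + g m) L := by
  intro ε hε
  obtain ⟨C, hC⟩ := hf ε hε
  obtain ⟨D, hD⟩ := hg ε hε
  exact ⟨C + D, (hC.and hD).mono fun m h => by rw [add_mul]; exact add_le_add h.1 h.2⟩

lemma const_mul (hf : GrowsAtMost f L) {c : ℝ} (hc : 0 ≤ c) :
    GrowsAtMost (fun m => c * f m) L := by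
  intro ε hε
  obtain ⟨C, hC⟩ := hf ε hε
  exact ⟨c * C, hC.mono fun m h => by rw [mul_assoc]; exact mul_le_mul_of_nonneg_left h hc⟩

lemma sum {ι : Type*} (s : Finset ι) {f : ι → ℕ → ℝ} (h : ∀ i ∈ s, GrowsAtMost (f i) L) :
    GrowsAtMost (fun m => ∑ i ∈ s, f i m) L := by
  classical
  induction s using Finset.induction_on with
  | empty => simpa using zero
  | insert i s hi ih =>
    simp_rw [Finset.sum_insert hi]
    exact (h i (Finset.mem_insert_self i s)).add
      (ih fun j hj => h j (Finset.mem_insert_of_mem hj))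

lemma comp_add_iff (hL : 0 ≤ L) (k : ℕ) :
    GrowsAtMost (fun m => f (m + k)) L ↔ GrowsAtMost f L := by
  constructor
  · intro h ε hε
    obtain ⟨C, hC⟩ := h ε hε
    have hpos : 0 < L + ε := by linarith
    refine ⟨C / (L + ε) ^ k, ?_⟩
    filter_upwards [(tendsto_sub_atTop_nat k).eventually hC, eventually_ge_atTop k] with m hm hkm
    rw [Nat.sub_add_cancel hkm, pow_sub₀ _ hpos.ne' hkm] at hm
    calc f m ≤ C * ((L + ε) ^ m / (L + ε) ^ k) := hm
      _ = C / (L + ε) ^ k * (L + ε) ^ m := by ring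
  · intro h ε hε
    obtain ⟨C, hC⟩ := h ε hε
    refine ⟨C * (L + ε) ^ k, ((tendsto_add_atTop_nat k).eventually hC).mono fun m hm => ?_⟩
    calc f (m + k) ≤ C * (L + ε) ^ (m + k) := hm
      _ = C * (L + ε) ^ k * (L + ε) ^ m := by ring

lemma of_le_natCast_add_one_mul (hL : 0 ≤ L)
    (h : ∀ ε > 0, ∃ C, ∀ᶠ m in atTop, f m ≤ C * ((m + 1) * (L + ε) ^ m)) :
    GrowsAtMost f L := by
  intro ε hε
  obtain ⟨C, hC⟩ := h (ε / 2) (half_pos hε)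
  have hpos : 0 < L + ε := by linarith
  set q := (L + ε / 2) / (L + ε)
  have hq : |q| < 1 := by
    rw [abs_of_nonneg (by positivity), div_lt_one hpos]
    linarith
  have hlim : Tendsto (fun m : ℕ => ((m : ℝ) + 1) * q ^ m) atTop (𝓝 0) := by
    simpa [add_mul] using (tendsto_pow_const_mul_const_pow_of_abs_lt_one 1 hq).add
      (tendsto_pow_atTop_nhds_zero_of_abs_lt_one hq)
  refine ⟨|C|, ?_⟩
  filter_upwards [hC, hlim.eventually (eventually_le_nhds one_pos)] with m hm hq1
  calc f m ≤ |C| * ((m + 1) * (L + ε / 2) ^ m) :=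
        hm.trans (mul_le_mul_of_nonneg_right (le_abs_self C) (by positivity))
    _ = |C| * (((m + 1) * q ^ m) * (L + ε) ^ m) := by
        rw [div_pow]; field_simp
    _ ≤ |C| * (1 * (L + ε) ^ m) := by gcongr
    _ = |C| * (L + ε) ^ m := by rw [one_mul]

lemma exists_forall_le (hL : 0 ≤ L) (h : GrowsAtMost f L) {ε : ℝ} (hε : 0 < ε) :
    ∃ C, ∀ m, f m ≤ C * (L + ε) ^ m := by
  obtain ⟨C, hC⟩ := h ε hε
  obtain ⟨N, hN⟩ := eventually_atTop.1 hC
  refine ⟨max C (∑ k ∈ Finset.range N, |f k| / (L + ε) ^ k), fun m => ?_⟩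
  rcases le_or_gt N m with hm | hm
  · exact (hN m hm).trans (mul_le_mul_of_nonneg_right (le_max_left _ _) (by positivity))
  · calc f m ≤ |f m| / (L + ε) ^ m * (L + ε) ^ m := by
          rw [div_mul_cancel₀ _ (by positivity)]; exact le_abs_self _
      _ ≤ _ := by
          refine mul_le_mul_of_nonneg_right ((Finset.single_le_sum
            (f := fun k => |f k| / (L + ε) ^ k) (fun k _ => by positivity)
            (Finset.mem_range.2 hm)).trans (le_max_right _ _)) (by positivity)

end GrowsAtMost

section GrowthRate

variable {f : ℕ → ℝ} {K L : ℝ}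

lemma tendsto_rpow_one_div_natCast {c : ℝ} (hc : c ≠ 0) :
    Tendsto (fun m : ℕ => c ^ ((1 : ℝ) / m)) atTop (𝓝 1) := by
  simpa [Function.comp_def] using
    (Real.continuousAt_const_rpow hc).tendsto.comp tendsto_one_div_atTop_nhds_zero_nat

lemma GrowsAtMost.exists_eventually_rpow_le (hf : ∀ m, 0 ≤ f m) (hL : 0 ≤ L)
    (h : GrowsAtMost f L) {ε : ℝ} (hε : 0 < ε) :
    ∃ C > 0, ∀ᶠ m : ℕ in atTop, f m ^ ((1 : ℝ) / m) ≤ C ^ ((1 : ℝ) / m) * (L + ε) := by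
  obtain ⟨C, hC⟩ := h ε hε
  refine ⟨|C| + 1, by positivity, ?_⟩
  filter_upwards [hC, eventually_ne_atTop 0] with m hm hm0
  have hle : f m ≤ (|C| + 1) * (L + ε) ^ m :=
    hm.trans (mul_le_mul_of_nonneg_right (by linarith [le_abs_self C]) (by positivity))
  calc f m ^ ((1 : ℝ) / m) ≤ ((|C| + 1) * (L + ε) ^ m) ^ ((1 : ℝ) / m) :=
        Real.rpow_le_rpow (hf m) hle (by positivity)
    _ = (|C| + 1) ^ ((1 : ℝ) / m) * (L + ε) := by
        rw [Real.mul_rpow (by positivity) (by positivity), one_div,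
          Real.pow_rpow_inv_natCast (by positivity) hm0]

lemma GrowsAtMost.isBoundedUnder (hf : ∀ m, 0 ≤ f m) (hK : 0 ≤ K) (h : GrowsAtMost f K) :
    IsBoundedUnder (· ≤ ·) atTop (fun m : ℕ => f m ^ ((1 : ℝ) / m)) := by
  obtain ⟨C, hC, hle⟩ := h.exists_eventually_rpow_le hf hK one_pos
  exact ((tendsto_rpow_one_div_natCast hC.ne').mul_const _).isBoundedUnder_le.mono_le hle

lemma GrowsAtMost.growthRate_le (hf : ∀ m, 0 ≤ f m) (hL : 0 ≤ L) (h : GrowsAtMost f L) :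
    growthRate f ≤ L := by
  refine le_of_forall_pos_le_add fun ε hε => ?_
  obtain ⟨C, hC, hle⟩ := h.exists_eventually_rpow_le hf hL hε
  have hlim := (tendsto_rpow_one_div_natCast hC.ne').mul_const (L + ε)
  rw [one_mul] at hlim
  calc growthRate f ≤ limsup (fun m : ℕ => C ^ ((1 : ℝ) / m) * (L + ε)) atTop :=
        limsup_le_limsup hle
          (isCoboundedUnder_le_of_le atTop fun m => Real.rpow_nonneg (hf m) _)
          hlim.isBoundedUnder_le
    _ = L + ε := hlim.limsup_eq

lemma growthRate_nonneg (hf : ∀ m, 0 ≤ f m) (hK : 0 ≤ K) (h : GrowsAtMost f K) :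
    0 ≤ growthRate f :=
  le_limsup_of_frequently_le (Frequently.of_forall fun m => Real.rpow_nonneg (hf m) _)
    (h.isBoundedUnder hf hK)

lemma growsAtMost_of_growthRate_le (hf : ∀ m, 0 ≤ f m)
    (hbdd : IsBoundedUnder (· ≤ ·) atTop (fun m : ℕ => f m ^ ((1 : ℝ) / m)))
    (hL : growthRate f ≤ L) : GrowsAtMost f L := by
  intro ε hε
  refine ⟨1, ((eventually_lt_of_limsup_lt (hL.trans_lt (lt_add_of_pos_right L hε)) hbdd).and
    (eventually_ne_atTop 0)).mono fun m ⟨hlt, hm⟩ => ?_⟩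
  calc f m = (f m ^ ((1 : ℝ) / m)) ^ m := by
        rw [one_div, Real.rpow_inv_natCast_pow (hf m) hm]
    _ ≤ 1 * (L + ε) ^ m := by
        rw [one_mul]; exact pow_le_pow_left₀ (Real.rpow_nonneg (hf m) _) hlt.le m

lemma growthRate_le_iff (hf : ∀ m, 0 ≤ f m) (hK : 0 ≤ K) (h : GrowsAtMost f K) (hL : 0 ≤ L) :
    growthRate f ≤ L ↔ GrowsAtMost f L :=
  ⟨growsAtMost_of_growthRate_le hf (h.isBoundedUnder hf hK), fun h' => h'.growthRate_le hf hL⟩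

end GrowthRate

section Ring

open Finset

variable {R : Type*} [Semiring R] {a b d : R}

lemma add_pow_eq_sum_antidiagonal_of_mul_eq_zero (h : b * a = 0) (m : ℕ) :
    (a + b) ^ m = ∑ x ∈ antidiagonal m, a ^ x.1 * b ^ x.2 := by
  induction m with
  | zero => simp
  | succ m ih =>
    have hb : b * ∑ x ∈ antidiagonal m, a ^ x.1 * b ^ x.2 = b ^ (m + 1) := by
      rw [Nat.sum_antidiagonal_eq_sum_range_succ (fun p q => a ^ p * b ^ q),
        mul_sum, sum_range_succ']
      have hzero : ∀ p, b * (a ^ (p + 1) * b ^ (m - (p + 1))) = 0 := fun p => by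
        rw [pow_succ', ← mul_assoc, ← mul_assoc, h, zero_mul, zero_mul]
      simp [hzero, ← pow_succ']
    rw [Nat.sum_antidiagonal_succ, pow_succ', ih, add_mul, hb, mul_sum, add_comm]
    simp only [← mul_assoc, ← pow_succ', pow_zero, one_mul]

lemma pow_succ_eq_mul_pow_of_mul_self_eq (h : b * b = b * d) (m : ℕ) :
    b ^ (m + 1) = b * d ^ m := by
  induction m with
  | zero => simp
  | succ m ih => rw [pow_succ', ih, ← mul_assoc, h, mul_assoc, ← pow_succ']

end Ring

section NormedRing

open Finset

variable {R : Type*} [NormedRing R] {a b d : R} {L : ℝ}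

lemma growsAtMost_norm_pow (a : R) : GrowsAtMost (fun m => ‖a ^ m‖) ‖a‖ := fun ε hε =>
  ⟨1, (eventually_gt_atTop 0).mono fun m hm => by
    rw [one_mul]
    exact (norm_pow_le' a hm).trans (pow_le_pow_left₀ (norm_nonneg a) (by linarith) m)⟩

lemma growsAtMost_norm_pow_of_mul_self_eq (h : b * b = b * d) (hL : 0 ≤ L)
    (hd : GrowsAtMost (fun m => ‖d ^ m‖) L) : GrowsAtMost (fun m => ‖b ^ m‖) L := by
  rw [← GrowsAtMost.comp_add_iff hL 1]
  refine (hd.const_mul (norm_nonneg b)).mono (Eventually.of_forall fun m => ?_)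
  rw [pow_succ_eq_mul_pow_of_mul_self_eq h]
  exact norm_mul_le _ _

lemma growsAtMost_norm_add_pow (h : b * a = 0) (hL : 0 ≤ L)
    (ha : GrowsAtMost (fun m => ‖a ^ m‖) L) (hb : GrowsAtMost (fun m => ‖b ^ m‖) L) :
    GrowsAtMost (fun m => ‖(a + b) ^ m‖) L := by
  refine GrowsAtMost.of_le_natCast_add_one_mul hL fun ε hε => ?_
  obtain ⟨C, hC⟩ := ha.exists_forall_le hL hε
  obtain ⟨D, hD⟩ := hb.exists_forall_le hL hε
  refine ⟨C * D, Eventually.of_forall fun m => ?_⟩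
  rw [add_pow_eq_sum_antidiagonal_of_mul_eq_zero h]
  calc ‖∑ x ∈ antidiagonal m, a ^ x.1 * b ^ x.2‖
      ≤ ∑ x ∈ antidiagonal m, ‖a ^ x.1‖ * ‖b ^ x.2‖ :=
        (norm_sum_le _ _).trans (sum_le_sum fun x _ => norm_mul_le _ _)
    _ ≤ ∑ x ∈ antidiagonal m, C * (L + ε) ^ x.1 * (D * (L + ε) ^ x.2) :=
        sum_le_sum fun x _ =>
          mul_le_mul (hC _) (hD _) (norm_nonneg _) ((norm_nonneg _).trans (hC _))
    _ = ∑ x ∈ antidiagonal m, C * D * (L + ε) ^ m :=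
        sum_congr rfl fun x hx => by
          rw [← mem_antidiagonal.1 hx, pow_add]; ring
    _ = C * D * ((m + 1) * (L + ε) ^ m) := by
        rw [sum_const, Nat.card_antidiagonal, nsmul_eq_mul]; push_cast; ring

end NormedRing

section NonnegMatrix

variable {ι : Type*} [Fintype ι] {A B : Matrix ι ι ℝ} {v : ι → ℝ}

lemma mulVec_apply_nonneg (hA : ∀ i j, 0 ≤ A i j) (hv : ∀ i, 0 ≤ v i) (a : ι) :
    0 ≤ (A *ᵥ v) a :=
  Finset.sum_nonneg fun c _ => mul_nonneg (hA a c) (hv c)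

lemma apply_mul_le_mulVec_apply (hA : ∀ i j, 0 ≤ A i j) (hv : ∀ i, 0 ≤ v i) (a c : ι) :
    A a c * v c ≤ (A *ᵥ v) a :=
  Finset.single_le_sum (f := fun c => A a c * v c) (fun c _ => mul_nonneg (hA a c) (hv c))
    (Finset.mem_univ c)

lemma pow_apply_le_pow_apply [DecidableEq ι] (hA : ∀ i j, 0 ≤ A i j)
    (hAB : ∀ i j, A i j ≤ B i j) (m : ℕ) :
    ∀ i j, (A ^ m) i j ≤ (B ^ m) i j := by
  induction m with
  | zero => simp
  | succ m ih =>
    intro i j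
    simp only [pow_succ, mul_apply]
    exact Finset.sum_le_sum fun k _ => mul_le_mul (ih i k) (hAB k j) (hA k j)
      ((pow_apply_nonneg hA m i k).trans (ih i k))

lemma linfty_opNorm_le_sum_norm_apply {κ : Type*} [Fintype κ] (A : Matrix ι κ ℝ) : ‖A‖ ≤ ∑ i, ∑ j, ‖A i j‖ := by
  rw [linfty_opNorm_def]
  have : (Finset.univ.sup fun i => ∑ j, ‖A i j‖₊) ≤ ∑ i, ∑ j, ‖A i j‖₊ :=
    Finset.sup_le fun i hi => Finset.single_le_sum (f := fun i => ∑ j, ‖A i j‖₊)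
      (fun _ _ => zero_le) hi
  simpa using NNReal.coe_le_coe.2 this

end NonnegMatrix

section RestrictBlock

variable {ι : Type*} {A B : Matrix ι ι ℝ} {U V U' W S T : Set ι}

noncomputable def restrictBlock (A : Matrix ι ι ℝ) (U V : Set ι) : Matrix ι ι ℝ :=
  of fun a c => if a ∈ U ∧ c ∈ V then A a c else 0

lemma restrictBlock_apply (a c : ι) :
    restrictBlock A U V a c = if a ∈ U ∧ c ∈ V then A a c else 0 := rfl

lemma restrictBlock_nonneg (hA : ∀ i j, 0 ≤ A i j) (a c : ι) : 0 ≤ restrictBlock A U V a c := by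
  rw [restrictBlock_apply]; split_ifs <;> simp [hA a c]

lemma restrictBlock_le (hA : ∀ i j, 0 ≤ A i j) (a c : ι) : restrictBlock A U V a c ≤ A a c := by
  rw [restrictBlock_apply]; split_ifs <;> simp [hA a c]

lemma restrictBlock_mul_restrictBlock_of_disjoint [Fintype ι] (h : Disjoint V U') :
    restrictBlock A U V * restrictBlock B U' W = 0 := by
  ext a c
  simp only [mul_apply, restrictBlock_apply, Matrix.zero_apply]
  refine Finset.sum_eq_zero fun k _ => ?_
  by_cases hk : k ∈ V
  · simp [Set.disjoint_left.1 h hk]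
  · simp [hk]

lemma restrictBlock_mul_restrictBlock_of_subset [Fintype ι] (h : V ⊆ U') :
    restrictBlock A U V * restrictBlock B U' W = restrictBlock A U V * restrictBlock B V W := by
  ext a c
  simp only [mul_apply, restrictBlock_apply]
  refine Finset.sum_congr rfl fun k _ => ?_
  by_cases hk : k ∈ V
  · simp [hk, h hk]
  · simp [hk]

lemma restrictBlock_eq_add (hTS : T ⊆ S) (hT : ∀ a ∈ T, ∀ c ∈ S \ T, A a c = 0) :
    restrictBlock A S S = restrictBlock A (S \ T) (S \ T) + restrictBlock A S T := by
  ext a c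
  simp only [Matrix.add_apply, restrictBlock_apply, Set.mem_sdiff]
  by_cases hc : c ∈ T
  · simp [hc, hTS hc]
  · by_cases ha : a ∈ T
    · by_cases hcS : c ∈ S
      · simp [ha, hc, hT a ha c ⟨hcS, hc⟩]
      · simp [hc, hcS]
    · simp [ha, hc]

lemma restrictBlock_pow_apply_eq_zero [Fintype ι] [DecidableEq ι] {a c : ι} (h : a ∉ U ∨ c ∉ V)
    {m : ℕ} (hm : m ≠ 0) :
    (restrictBlock A U V ^ m) a c = 0 := by
  obtain ⟨m, rfl⟩ := Nat.exists_eq_succ_of_ne_zero hm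
  rcases h with ha | hc
  · rw [pow_succ', mul_apply]
    exact Finset.sum_eq_zero fun k _ => by simp [restrictBlock_apply, ha]
  · rw [pow_succ, mul_apply]
    exact Finset.sum_eq_zero fun k _ => by simp [restrictBlock_apply, hc]

def IsPredClosed (A : Matrix ι ι ℝ) (S : Set ι) : Prop :=
  ∀ a c, 0 < A a c → c ∈ S → a ∈ S

lemma pow_apply_eq_restrictBlock_pow_apply [Fintype ι] [DecidableEq ι] (hA : ∀ i j, 0 ≤ A i j)
    (hS : IsPredClosed A S) (m : ℕ) (a : ι) {c : ι} (hc : c ∈ S) : (A ^ m) a c = (restrictBlock A S S ^ m) a c := by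
  induction m generalizing c with
  | zero => simp
  | succ m ih =>
    simp only [pow_succ, mul_apply]
    refine Finset.sum_congr rfl fun k _ => ?_
    by_cases hk : k ∈ S
    · rw [ih hk, restrictBlock_apply, if_pos ⟨hk, hc⟩]
    · have hAkc : A k c = 0 := le_antisymm (not_lt.1 fun h => hk (hS k c h hc)) (hA k c)
      simp [restrictBlock_apply, hAkc, hk]

lemma pow_mulVec_eq_restrictBlock_pow_mulVec [Fintype ι] [DecidableEq ι] (hA : ∀ i j, 0 ≤ A i j)
    (hS : IsPredClosed A S) {v : ι → ℝ} (hv : ∀ c, v c ≠ 0 → c ∈ S) (m : ℕ) :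
    (A ^ m) *ᵥ v = (restrictBlock A S S ^ m) *ᵥ v := by
  ext a
  simp only [mulVec, dotProduct]
  refine Finset.sum_congr rfl fun c _ => ?_
  by_cases hc : v c = 0
  · simp [hc]
  · rw [pow_apply_eq_restrictBlock_pow_apply hA hS m a (hv c hc)]

end RestrictBlock

section Access

variable {n : ℕ} {P : Matrix (Fin n) (Fin n) ℝ}

def classOf (P : Matrix (Fin n) (Fin n) ℝ) (i : Fin n) : Set (Fin n) :=
  {a | Access P i a ∧ Access P a i}

lemma classMatrix_eq_restrictBlock (P : Matrix (Fin n) (Fin n) ℝ) (i : Fin n) :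
    classMatrix P i = restrictBlock P (classOf P i) (classOf P i) := by
  ext a c
  simp [classMatrix, restrictBlock_apply, classOf]

lemma IsPredClosed.mem_of_access {S : Set (Fin n)} (hS : IsPredClosed P S) {a c : Fin n}
    (h : Access P a c) (hc : c ∈ S) : a ∈ S := by
  induction h using Relation.ReflTransGen.head_induction_on with
  | refl => exact hc
  | head hab _ ih => exact hS _ _ hab ih

lemma exists_mem_forall_access_imp_access (P : Matrix (Fin n) (Fin n) ℝ) {S : Set (Fin n)}
    (hS : S.Nonempty) : ∃ i ∈ S, ∀ c ∈ S, Access P i c → Access P c i := by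
  obtain ⟨i, hiS, hmin⟩ :=
    exists_minimalFor_of_wellFoundedLT (· ∈ S) (fun a => {v | Access P a v}) hS
  refine ⟨i, hiS, fun c hc hic => ?_⟩
  exact hmin hc (fun v hv => Relation.ReflTransGen.trans hic hv) Relation.ReflTransGen.refl

lemma exists_pow_mulVec_apply_pos (hP : ∀ i j, 0 ≤ P i j) {b : Fin n → ℝ}
    (hb : ∀ i, 0 ≤ b i) {c j : Fin n} (h : Access P c j) (hbj : 0 < b j) :
    ∃ k, 0 < (P ^ k *ᵥ b) c := by
  induction h using Relation.ReflTransGen.head_induction_on with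
  | refl => exact ⟨0, by simpa using hbj⟩
  | head hcd _ ih =>
    obtain ⟨k, hk⟩ := ih
    refine ⟨k + 1, (mul_pos hcd hk).trans_le ?_⟩
    rw [pow_succ', ← mulVec_mulVec]
    exact apply_mul_le_mulVec_apply hP (mulVec_apply_nonneg (pow_apply_nonneg hP k) hb) _ _

end Access

section SpectralRadius

attribute [local instance] Matrix.linftyOpNormedRing

variable {n : ℕ} {P : Matrix (Fin n) (Fin n) ℝ} {L : ℝ}

lemma rho_le_iff (A : Matrix (Fin n) (Fin n) ℝ) (hL : 0 ≤ L) :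
    rho A ≤ L ↔ GrowsAtMost (fun m => ‖A ^ m‖) L :=
  growthRate_le_iff (fun _ => norm_nonneg _) (norm_nonneg A) (growsAtMost_norm_pow A) hL

lemma growsAtMost_norm_pow_mulVec (A : Matrix (Fin n) (Fin n) ℝ) (b : Fin n → ℝ) :
    GrowsAtMost (fun m => ‖(A ^ m) *ᵥ b‖) ‖A‖ :=
  ((growsAtMost_norm_pow A).const_mul (norm_nonneg b)).mono (Eventually.of_forall fun m => by
    rw [mul_comm]; exact linfty_opNorm_mulVec _ _)

lemma localRho_le_iff (A : Matrix (Fin n) (Fin n) ℝ) (b : Fin n → ℝ) (hL : 0 ≤ L) :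
    localRho A b ≤ L ↔ GrowsAtMost (fun m => ‖(A ^ m) *ᵥ b‖) L :=
  growthRate_le_iff (fun _ => norm_nonneg _) (norm_nonneg A) (growsAtMost_norm_pow_mulVec A b) hL

lemma localRho_nonneg (A : Matrix (Fin n) (Fin n) ℝ) (b : Fin n → ℝ) : 0 ≤ localRho A b :=
  growthRate_nonneg (fun _ => norm_nonneg _) (norm_nonneg A) (growsAtMost_norm_pow_mulVec A b)

lemma growsAtMost_norm_restrictBlock_pow (hP : ∀ i j, 0 ≤ P i j) (hL : 0 ≤ L) (S : Set (Fin n))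
    (hS : IsPredClosed P S) (hρ : ∀ i ∈ S, rho (classMatrix P i) ≤ L) :
    GrowsAtMost (fun m => ‖restrictBlock P S S ^ m‖) L := by
  induction S using WellFoundedLT.induction with
  | _ S ih =>
  rcases S.eq_empty_or_nonempty with rfl | hne
  · refine GrowsAtMost.zero.mono ((eventually_ne_atTop 0).mono fun m hm => ?_)
    have : restrictBlock P ∅ ∅ = 0 := by ext; simp [restrictBlock_apply]
    rw [this, zero_pow hm, norm_zero]
  obtain ⟨i, hiS, hfinal⟩ := exists_mem_forall_access_imp_access P hne
  set T := classOf P i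
  have hTS : T ⊆ S := fun a ha => hS.mem_of_access ha.2 hiS
  have hT : ∀ a ∈ T, ∀ c ∈ S, 0 < P a c → c ∈ T := fun a ha c hc hac =>
    ⟨ha.1.tail hac, hfinal c hc (ha.1.tail hac)⟩
  have hT0 : ∀ a ∈ T, ∀ c ∈ S \ T, P a c = 0 := fun a ha c hc =>
    le_antisymm (not_lt.1 fun h => hc.2 (hT a ha c hc.1 h)) (hP a c)
  have hS' : IsPredClosed P (S \ T) := fun a c hac hc =>
    ⟨hS a c hac hc.1, fun ha => hc.2 (hT a ha c hc.1 hac)⟩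
  have hA := ih (S \ T) (hTS.sdiff_ssubset_of_nonempty ⟨i, .refl, .refl⟩) hS'
    fun j hj => hρ j hj.1
  have hD : GrowsAtMost (fun m => ‖restrictBlock P T T ^ m‖) L := by
    rw [← rho_le_iff _ hL, ← classMatrix_eq_restrictBlock]
    exact hρ i hiS
  rw [restrictBlock_eq_add hTS hT0]
  have hY := growsAtMost_norm_pow_of_mul_self_eq
    (restrictBlock_mul_restrictBlock_of_subset hTS) hL hD
  exact growsAtMost_norm_add_pow
    (restrictBlock_mul_restrictBlock_of_disjoint Set.disjoint_sdiff_right) hL hA hY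

lemma localRho_le_of_forall_rho_classMatrix_le (hP : ∀ i j, 0 ≤ P i j) {b : Fin n → ℝ}
    (hb : ∀ i, 0 ≤ b i) (hL : 0 ≤ L)
    (h : ∀ i, (∃ j, 0 < b j ∧ Access P i j) → rho (classMatrix P i) ≤ L) :
    localRho P b ≤ L := by
  set S := {v | ∃ j, 0 < b j ∧ Access P v j}
  have hS : IsPredClosed P S := fun a c hac ⟨j, hbj, hcj⟩ => ⟨j, hbj, hcj.head hac⟩
  have hbS : ∀ j, b j ≠ 0 → j ∈ S := fun j hj => ⟨j, (hb j).lt_of_ne' hj, .refl⟩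
  rw [localRho_le_iff P b hL]
  refine ((growsAtMost_norm_restrictBlock_pow hP hL S hS h).const_mul (norm_nonneg b)).mono
    (Eventually.of_forall fun m => ?_)
  rw [pow_mulVec_eq_restrictBlock_pow_mulVec hP hS hbS, mul_comm]
  exact linfty_opNorm_mulVec _ _

lemma rho_classMatrix_le_localRho (hP : ∀ i j, 0 ≤ P i j) {b : Fin n → ℝ} (hb : ∀ i, 0 ≤ b i)
    {i j : Fin n} (hij : Access P i j) (hbj : 0 < b j) :
    rho (classMatrix P i) ≤ localRho P b := by
  have hL := localRho_nonneg P b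
  have hPb := (localRho_le_iff P b hL).1 le_rfl
  rw [rho_le_iff _ hL, classMatrix_eq_restrictBlock]
  set M := restrictBlock P (classOf P i) (classOf P i)
  refine (GrowsAtMost.sum Finset.univ fun a _ => GrowsAtMost.sum Finset.univ fun c _ => ?_).mono
    (Eventually.of_forall fun m => linfty_opNorm_le_sum_norm_apply _)
  by_cases hac : a ∈ classOf P i ∧ c ∈ classOf P i
  · obtain ⟨k, hk⟩ := exists_pow_mulVec_apply_pos hP hb (hac.2.2.trans hij) hbj
    refine (((GrowsAtMost.comp_add_iff hL k).2 hPb).const_mul (inv_nonneg.2 hk.le)).mono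
      (Eventually.of_forall fun m => ?_)
    have hPkb := mulVec_apply_nonneg (pow_apply_nonneg hP k) hb
    rw [le_inv_mul_iff₀ hk, Real.norm_of_nonneg (pow_apply_nonneg (restrictBlock_nonneg hP) m a c)]
    calc (P ^ k *ᵥ b) c * (M ^ m) a c ≤ (P ^ m) a c * (P ^ k *ᵥ b) c := by
          rw [mul_comm]
          exact mul_le_mul_of_nonneg_right
            (pow_apply_le_pow_apply (restrictBlock_nonneg hP) (restrictBlock_le hP) m a c)
            (hPkb c)
      _ ≤ (P ^ m *ᵥ (P ^ k *ᵥ b)) a := apply_mul_le_mulVec_apply (pow_apply_nonneg hP m) hPkb a c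
      _ = (P ^ (m + k) *ᵥ b) a := by rw [mulVec_mulVec, pow_add]
      _ ≤ ‖P ^ (m + k) *ᵥ b‖ := (Real.le_norm_self _).trans (norm_le_pi_norm _ a)
  · refine GrowsAtMost.zero.mono ((eventually_ne_atTop 0).mono fun m hm => ?_)
    rw [restrictBlock_pow_apply_eq_zero (not_and_or.1 hac) hm, norm_zero]

end SpectralRadius

theorem stmt7 {n : ℕ} (P : Matrix (Fin n) (Fin n) ℝ) (hP : ∀ i j, 0 ≤ P i j)
    (b : Fin n → ℝ) (hb : ∀ i, 0 ≤ b i) :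
    localRho P b =
      sSup ({0} ∪ {r : ℝ | ∃ i : Fin n,
        (∃ j, 0 < b j ∧ Access P i j) ∧ r = rho (classMatrix P i)}) := by
  have hbdd : BddAbove ({0} ∪ {r : ℝ | ∃ i : Fin n,
      (∃ j, 0 < b j ∧ Access P i j) ∧ r = rho (classMatrix P i)}) :=
    ((Set.finite_singleton 0).union ((Set.finite_range fun i => rho (classMatrix P i)).subset
      (by rintro _ ⟨i, _, rfl⟩; exact ⟨i, rfl⟩))).bddAbove
  apply le_antisymm
  · exact localRho_le_of_forall_rho_classMatrix_le hP hb (le_csSup hbdd (Or.inl rfl))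
      fun i hi => le_csSup hbdd (Or.inr ⟨i, hi, rfl⟩)
  · refine csSup_le ⟨0, Or.inl rfl⟩ ?_
    rintro r (rfl | ⟨i, ⟨j, hbj, hij⟩, rfl⟩)
    · exact localRho_nonneg P b
    · exact rho_classMatrix_le_localRho hP hb hij hbj
end

section
/- Let K be a proper cone in ℝⁿ, A an n×n real matrix with AK ⊆ K, and b ∈ K nonzero. If the equation (A - λI)x = b has a solution x ∈ K for some λ > 0, then λ ≤ ρ(A). -/
open Filter Matrix
open scoped Topology

attribute [local instance] Matrix.linftyOpNormedAddCommGroup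

/-- A proper cone in `ℝⁿ`: closed, convex, pointed, with nonempty interior. -/
structure IsProperCone {n : ℕ} (K : Set (Fin n → ℝ)) : Prop where
  convex : Convex ℝ K
  isClosed : IsClosed K
  smul_mem : ∀ c : ℝ, 0 ≤ c → ∀ x ∈ K, c • x ∈ K
  pointed : K ∩ (-K) = {0}
  full : (interior K).Nonempty

/-! From `(A - λ)x = b` we get `A^(m+1) x - λ^(m+1) x = A (A^m x - λ^m x) + λ^m b`, so by
invariance `A^m x - λ^m x ∈ K` for all `m`. As `K` is closed, convex and pointed and `0 ≠ x ∈ K`,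
Hahn–Banach gives a continuous functional `f ≥ 0` on `K` with `f x > 0`. Then
`λ^m f x ≤ f (A^m x) ≤ ‖f‖ ‖A^m‖ ‖x‖`, so `‖A^m‖^(1/m) ≥ (f x / (‖f‖ ‖x‖))^(1/m) λ → λ`, and the
limsup in Gelfand's formula is at least `λ`. -/

namespace IsProperCone

variable {n : ℕ} {K : Set (Fin n → ℝ)}

theorem zero_mem (hK : IsProperCone K) : (0 : Fin n → ℝ) ∈ K :=
  (hK.pointed.symm ▸ rfl : (0 : Fin n → ℝ) ∈ K ∩ -K).1

theorem add_mem (hK : IsProperCone K) {x y : Fin n → ℝ} (hx : x ∈ K) (hy : y ∈ K) :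
    x + y ∈ K := by
  have hmid := hK.convex hx hy (by norm_num : (0 : ℝ) ≤ 1 / 2) (by norm_num : (0 : ℝ) ≤ 1 / 2)
    (by norm_num)
  convert hK.smul_mem 2 zero_le_two _ hmid using 1
  module

theorem neg_notMem (hK : IsProperCone K) {x : Fin n → ℝ} (hx : x ∈ K) (hx0 : x ≠ 0) :
    -x ∉ K := by
  intro hneg
  have hxx : x ∈ K ∩ -K := ⟨hx, by simpa using hneg⟩
  rw [hK.pointed] at hxx
  exact hx0 hxx

def toProperCone (hK : IsProperCone K) : ProperCone ℝ (Fin n → ℝ) where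
  carrier := K
  zero_mem' := hK.zero_mem
  add_mem' := hK.add_mem
  smul_mem' c x hx := hK.smul_mem c c.2 x hx
  isClosed' := hK.isClosed

end IsProperCone

theorem ProperCone.exists_dual_pos_of_neg_notMem {E : Type*} [TopologicalSpace E]
    [AddCommGroup E] [IsTopologicalAddGroup E] [Module ℝ E] [ContinuousSMul ℝ E]
    [LocallyConvexSpace ℝ E] (C : ProperCone ℝ E) {x : E} (hx : -x ∉ C) :
    ∃ f : StrongDual ℝ E, (∀ y ∈ C, 0 ≤ f y) ∧ 0 < f x := by
  obtain ⟨f, hfC, hfx⟩ := C.hyperplane_separation_point hx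
  exact ⟨f, hfC, by simpa using hfx⟩

theorem PointedCone.pow_apply_sub_pow_smul_mem {R E : Type*} [CommRing R] [PartialOrder R]
    [IsOrderedRing R] [AddCommGroup E] [Module R E] (C : PointedCone R E)
    {T : Module.End R E} (hT : ∀ v ∈ C, T v ∈ C) {c : R} (hc : 0 ≤ c) {x : E}
    (hx : T x - c • x ∈ C) (m : ℕ) : (T ^ m) x - c ^ m • x ∈ C := by
  induction m with
  | zero => simp
  | succ m ih =>
    have hstep : (T ^ (m + 1)) x - c ^ (m + 1) • x
        = T ((T ^ m) x - c ^ m • x) + c ^ m • (T x - c • x) := by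
      rw [pow_succ', Module.End.mul_apply, map_sub, map_smul, pow_succ, mul_smul, smul_sub]
      abel
    rw [hstep]
    exact C.add_mem (hT _ ih) (C.smul_mem (pow_nonneg hc m) hx)

theorem Matrix.mul_le_linfty_opNorm_of_le_dual {m : Type*} [Fintype m]
    (B : Matrix m m ℝ) {f : StrongDual ℝ (m → ℝ)} {x : m → ℝ} {c : ℝ} (hfx : 0 < f x)
    (h : c * f x ≤ f (B *ᵥ x)) : f x / (‖f‖ * ‖x‖) * c ≤ ‖B‖ := by
  have hfB : f (B *ᵥ x) ≤ ‖f‖ * ‖x‖ * ‖B‖ :=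
    calc f (B *ᵥ x) ≤ ‖f‖ * ‖B *ᵥ x‖ := (le_abs_self _).trans (f.le_opNorm _)
      _ ≤ ‖f‖ * (‖B‖ * ‖x‖) := by gcongr; exact B.linfty_opNorm_mulVec x
      _ = ‖f‖ * ‖x‖ * ‖B‖ := by ring
  have hfx_le : f x ≤ ‖f‖ * ‖x‖ := (le_abs_self _).trans (f.le_opNorm x)
  rw [div_mul_eq_mul_div, div_le_iff₀ (hfx.trans_le hfx_le)]
  linarith

theorem norm_pow_rpow_one_div_le {R : Type*} [SeminormedRing R] (a : R) {m : ℕ} (hm : m ≠ 0) :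
    ‖a ^ m‖ ^ ((1 : ℝ) / m) ≤ ‖a‖ := by
  calc ‖a ^ m‖ ^ ((1 : ℝ) / m) ≤ (‖a‖ ^ m) ^ ((1 : ℝ) / m) :=
        Real.rpow_le_rpow (norm_nonneg _) (norm_pow_le' a (Nat.pos_of_ne_zero hm)) (by positivity)
    _ = ‖a‖ := by rw [one_div, Real.pow_rpow_inv_natCast (norm_nonneg a) hm]

theorem isBoundedUnder_norm_pow_rpow_one_div {R : Type*} [SeminormedRing R] (a : R) :
    IsBoundedUnder (· ≤ ·) atTop fun m : ℕ ↦ ‖a ^ m‖ ^ ((1 : ℝ) / m) :=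
  isBoundedUnder_of_eventually_le <|
    (eventually_ne_atTop 0).mono fun _ hm ↦ norm_pow_rpow_one_div_le a hm

theorem le_limsup_rpow_one_div_of_mul_pow_le {u : ℕ → ℝ} {C lam : ℝ}
    (hbdd : IsBoundedUnder (· ≤ ·) atTop fun m : ℕ ↦ u m ^ ((1 : ℝ) / m)) (hC : 0 < C)
    (hlam : 0 < lam) (h : ∀ m, C * lam ^ m ≤ u m) :
    lam ≤ limsup (fun m : ℕ ↦ u m ^ ((1 : ℝ) / m)) atTop := by
  have hlim : Tendsto (fun m : ℕ ↦ C ^ ((1 : ℝ) / m) * lam) atTop (𝓝 lam) := by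
    simpa using ((Real.continuousAt_const_rpow hC.ne').tendsto.comp
      tendsto_one_div_atTop_nhds_zero_nat).mul_const lam
  have hle : ∀ᶠ m : ℕ in atTop, C ^ ((1 : ℝ) / m) * lam ≤ u m ^ ((1 : ℝ) / m) := by
    filter_upwards [eventually_ne_atTop 0] with m hm
    calc C ^ ((1 : ℝ) / m) * lam = (C * lam ^ m) ^ ((1 : ℝ) / m) := by
          rw [Real.mul_rpow hC.le (by positivity), one_div,
            Real.pow_rpow_inv_natCast hlam.le hm]
      _ ≤ u m ^ ((1 : ℝ) / m) := Real.rpow_le_rpow (by positivity) (h m) (by positivity)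
  calc lam = limsup (fun m : ℕ ↦ C ^ ((1 : ℝ) / m) * lam) atTop := hlim.limsup_eq.symm
    _ ≤ _ := limsup_le_limsup hle hlim.isBoundedUnder_ge.isCoboundedUnder_le hbdd

theorem le_rho_of_mul_pow_le_norm {n : ℕ} (A : Matrix (Fin n) (Fin n) ℝ) {C lam : ℝ}
    (hC : 0 < C) (hlam : 0 < lam) (h : ∀ m, C * lam ^ m ≤ ‖A ^ m‖) : lam ≤ rho A :=
  letI := Matrix.linftyOpNormedRing (n := Fin n) (α := ℝ)
  le_limsup_rpow_one_div_of_mul_pow_le (isBoundedUnder_norm_pow_rpow_one_div A) hC hlam h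

theorem stmt12 {n : ℕ} {K : Set (Fin n → ℝ)} (hK : IsProperCone K)
    (A : Matrix (Fin n) (Fin n) ℝ) (hA : ∀ v ∈ K, A.mulVec v ∈ K)
    (b : Fin n → ℝ) (hb : b ∈ K) (hb0 : b ≠ 0) (lam : ℝ) (hlam : 0 < lam)
    (hsol : ∃ x ∈ K, (A - lam • (1 : Matrix (Fin n) (Fin n) ℝ)).mulVec x = b) :
    lam ≤ rho A := by
  obtain ⟨x, hxK, hx⟩ := hsol
  rw [sub_mulVec, smul_mulVec, one_mulVec] at hx
  have hx0 : x ≠ 0 := by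
    rintro rfl
    exact hb0 (by simpa using hx.symm)
  have horbit (m : ℕ) : (A ^ m) *ᵥ x - lam ^ m • x ∈ K := by
    have h := (hK.toProperCone : PointedCone ℝ (Fin n → ℝ)).pow_apply_sub_pow_smul_mem
      (T := toLin' A) hA hlam.le (hx ▸ hb) m
    rwa [← toLin'_pow, toLin'_apply] at h
  obtain ⟨f, hfK, hfx⟩ := hK.toProperCone.exists_dual_pos_of_neg_notMem (hK.neg_notMem hxK hx0)
  have hfx_le : f x ≤ ‖f‖ * ‖x‖ := (le_abs_self _).trans (f.le_opNorm x)
  refine le_rho_of_mul_pow_le_norm A (div_pos hfx (hfx.trans_le hfx_le)) hlam fun m ↦ ?_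
  have hfm := hfK _ (horbit m)
  rw [map_sub, map_smul, smul_eq_mul, sub_nonneg] at hfm
  exact (A ^ m).mul_le_linfty_opNorm_of_le_dual hfx hfm
end

section
/- Let K be a proper cone in ℝⁿ and A an n×n real matrix with AK ⊆ K. If there exists x in the interior of K with ρ(A)·x - Ax ∈ K, then the eigenvalue ρ(A) of A has index 1, i.e., ker(ρ(A)I - A)² = ker(ρ(A)I - A). -/
/-!
Let `B = ρ - A`, `B² v = 0` and `w = B v`, so that `A w = ρ w` and `A v = ρ v - w`. As `x` is
interior, `x ± ε v ∈ K` for some `ε > 0`. Induction gives `ρ ^ m x - A ^ m x ∈ K`, and adding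
`A ^ m (x ± ε v) ∈ K` yields `ρ ^ m (x ± ε v) ∓ ε m ρ ^ (m - 1) w ∈ K`. Dividing by `m ρ ^ (m - 1)`
and letting `m → ∞` gives `∓ w ∈ K` since `K` is closed, hence `w = 0` since `K` is pointed.
-/

open Filter Matrix
open scoped Topology

attribute [local instance] Matrix.linftyOpNormedAddCommGroup

namespace Matrix

variable {ι R : Type*} [Fintype ι] [DecidableEq ι]

theorem pow_mulVec_mem [CommSemiring R] {K : Set (ι → R)} {A : Matrix ι ι R}
    (hA : ∀ v ∈ K, A *ᵥ v ∈ K) (m : ℕ) {v : ι → R} (hv : v ∈ K) : (A ^ m) *ᵥ v ∈ K := by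
  induction m with
  | zero => simpa using hv
  | succ m ih =>
    rw [pow_succ', ← mulVec_mulVec]
    exact hA _ ih

/-- Multiplied by `r` so that no `r ^ (m - 1)` appears. -/
theorem smul_pow_mulVec_of_mulVec_eq_smul_sub [CommRing R] {A : Matrix ι ι R} {r : R}
    {y w : ι → R} (hw : A *ᵥ w = r • w) (hy : A *ᵥ y = r • y - w) (m : ℕ) :
    r • (A ^ m *ᵥ y) = r ^ m • (r • y - (m : R) • w) := by
  induction m with
  | zero => simp
  | succ m ih =>
    rw [pow_succ', ← mulVec_mulVec, ← mulVec_smul, ih, mulVec_smul, mulVec_sub, mulVec_smul,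
      mulVec_smul, hy, hw]
    push_cast
    module

end Matrix

theorem exists_add_smul_mem_and_sub_smul_mem_of_mem_interior {E : Type*} [AddCommGroup E]
    [Module ℝ E] [TopologicalSpace E] [ContinuousAdd E] [ContinuousSMul ℝ E] {s : Set E}
    {x : E} (hx : x ∈ interior s) (v : E) :
    ∃ ε > (0 : ℝ), x + ε • v ∈ s ∧ x - ε • v ∈ s := by
  have hline : Tendsto (fun t : ℝ => x + t • v) (𝓝 0) (𝓝 x) := by
    simpa using (continuous_const.add (continuous_id.smul continuous_const)).tendsto
      (0 : ℝ) (f := fun t : ℝ => x + t • v)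
  have hnear : ∀ᶠ t in 𝓝 (0 : ℝ), x + t • v ∈ s :=
    hline.eventually (mem_interior_iff_mem_nhds.mp hx)
  have hboth : ∀ᶠ t in 𝓝 (0 : ℝ), x + t • v ∈ s ∧ x - t • v ∈ s :=
    hnear.and (by
      simpa [sub_eq_add_neg] using (continuous_neg.tendsto' (0 : ℝ) 0 neg_zero).eventually hnear)
  obtain ⟨ε, hε, hεpos⟩ :=
    ((hboth.filter_mono nhdsWithin_le_nhds).and (self_mem_nhdsWithin (s := Set.Ioi 0))).exists
  exact ⟨ε, hεpos, hε⟩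

namespace IsProperCone

variable {n : ℕ} {K : Set (Fin n → ℝ)} {A : Matrix (Fin n) (Fin n) ℝ} {r : ℝ}
  {x : Fin n → ℝ}

theorem add_mem_s16 (hK : IsProperCone K) {a b : Fin n → ℝ} (ha : a ∈ K) (hb : b ∈ K) :
    a + b ∈ K := by
  have hmid := hK.convex ha hb (by norm_num : (0 : ℝ) ≤ 1 / 2) (by norm_num : (0 : ℝ) ≤ 1 / 2)
    (by norm_num)
  convert hK.smul_mem 2 zero_le_two _ hmid using 1
  module

theorem eq_zero_of_mem_of_neg_mem (hK : IsProperCone K) {a : Fin n → ℝ} (ha : a ∈ K)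
    (ha' : -a ∈ K) : a = 0 := by
  have : a ∈ K ∩ -K := ⟨ha, ha'⟩
  rwa [hK.pointed] at this

theorem mem_of_forall_add_natCast_smul_mem (hK : IsProperCone K) {y z : Fin n → ℝ}
    (h : ∀ m : ℕ, y + (m : ℝ) • z ∈ K) : z ∈ K := by
  have hlim : Tendsto (fun m : ℕ => (1 / ((m : ℝ) + 1)) • y + z) atTop (𝓝 z) := by
    simpa using ((tendsto_one_div_add_atTop_nhds_zero_nat (𝕜 := ℝ)).smul_const y).add_const z
  refine hK.isClosed.mem_of_tendsto hlim (Eventually.of_forall fun m => ?_)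
  convert hK.smul_mem (1 / ((m : ℝ) + 1)) (by positivity) _ (h (m + 1)) using 1
  push_cast
  match_scalars <;> field_simp

theorem pow_smul_sub_pow_mulVec_mem (hK : IsProperCone K) (hA : ∀ v ∈ K, A *ᵥ v ∈ K)
    (hr : 0 ≤ r) (hxr : r • x - A *ᵥ x ∈ K) (m : ℕ) : r ^ m • x - (A ^ m) *ᵥ x ∈ K := by
  induction m with
  | zero => simpa using hK.smul_mem 0 le_rfl _ hxr
  | succ m ih =>
    have hsplit : r ^ (m + 1) • x - (A ^ (m + 1)) *ᵥ x =
        r • (r ^ m • x - (A ^ m) *ᵥ x) + (A ^ m) *ᵥ (r • x - A *ᵥ x) := by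
      rw [pow_succ, pow_succ, ← mulVec_mulVec, mulVec_sub, mulVec_smul]
      module
    rw [hsplit]
    exact hK.add_mem_s16 (hK.smul_mem r hr _ ih) (A.pow_mulVec_mem hA m hxr)

/-- For `r > 0`, `r ^ m • (r • (x + y) - m • w) ∈ K` for every `m`; divide by `r ^ m` and
use that `K` is closed. For `r ≤ 0`, `-w = (r • x - A x) + A (x + y) + (-r) • (x + y)`. -/
theorem neg_mem_of_mulVec_eq_smul_sub (hK : IsProperCone K) (hA : ∀ v ∈ K, A *ᵥ v ∈ K)
    (hxr : r • x - A *ᵥ x ∈ K) {y w : Fin n → ℝ} (hxy : x + y ∈ K) (hw : A *ᵥ w = r • w)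
    (hy : A *ᵥ y = r • y - w) : -w ∈ K := by
  rcases le_or_gt r 0 with hr | hr
  · have hsplit : -w = (r • x - A *ᵥ x) + A *ᵥ (x + y) + (-r) • (x + y) := by
      rw [mulVec_add, hy]
      module
    rw [hsplit]
    exact hK.add_mem_s16 (hK.add_mem_s16 hxr (hA _ hxy)) (hK.smul_mem _ (by linarith) _ hxy)
  · refine hK.mem_of_forall_add_natCast_smul_mem (y := r • (x + y)) fun m => ?_
    have hmem : r • ((r ^ m • x - (A ^ m) *ᵥ x) + (A ^ m) *ᵥ (x + y)) ∈ K :=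
      hK.smul_mem r hr.le _
        (hK.add_mem_s16 (hK.pow_smul_sub_pow_mulVec_mem hA hr.le hxr m) (A.pow_mulVec_mem hA m hxy))
    have hchain : r • ((r ^ m • x - (A ^ m) *ᵥ x) + (A ^ m) *ᵥ (x + y)) =
        r ^ m • (r • (x + y) + (m : ℝ) • -w) := by
      rw [mulVec_add]
      linear_combination (norm := module) smul_pow_mulVec_of_mulVec_eq_smul_sub hw hy m
    have := hK.smul_mem (r ^ m)⁻¹ (by positivity) _ (hchain ▸ hmem)
    rwa [smul_smul, inv_mul_cancel₀ (pow_pos hr m).ne', one_smul] at this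

theorem ker_sq_eq_ker (hK : IsProperCone K) (hA : ∀ v ∈ K, A *ᵥ v ∈ K)
    (hx : x ∈ interior K) (hxr : r • x - A *ᵥ x ∈ K) :
    {v | ((r • (1 : Matrix (Fin n) (Fin n) ℝ) - A) ^ 2) *ᵥ v = 0} =
      {v | (r • (1 : Matrix (Fin n) (Fin n) ℝ) - A) *ᵥ v = 0} := by
  have hB : ∀ u, (r • (1 : Matrix (Fin n) (Fin n) ℝ) - A) *ᵥ u = r • u - A *ᵥ u := fun u => by
    rw [sub_mulVec, smul_mulVec, one_mulVec]
  ext v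
  simp only [Set.mem_ofPred_eq, sq, ← mulVec_mulVec]
  refine ⟨fun hv => ?_, fun hv => by rw [hv, mulVec_zero]⟩
  set w := (r • (1 : Matrix (Fin n) (Fin n) ℝ) - A) *ᵥ v with hwv
  have hw : A *ᵥ w = r • w := (sub_eq_zero.mp ((hB w).symm.trans hv)).symm
  have hv' : A *ᵥ v = r • v - w := by rw [hwv, hB]; abel
  obtain ⟨ε, hε, hplus, hminus⟩ := exists_add_smul_mem_and_sub_smul_mem_of_mem_interior hx v
  have hneg : -(ε • w) ∈ K := hK.neg_mem_of_mulVec_eq_smul_sub hA hxr hplus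
    (by rw [mulVec_smul, hw, smul_comm]) (by rw [mulVec_smul, hv']; module)
  have hpos : -(-(ε • w)) ∈ K := hK.neg_mem_of_mulVec_eq_smul_sub hA hxr
    (y := -(ε • v)) (by rwa [← sub_eq_add_neg])
    (by rw [mulVec_neg, mulVec_smul, hw, smul_comm, smul_neg])
    (by rw [mulVec_neg, mulVec_smul, hv']; module)
  have hεw : ε • w = 0 := hK.eq_zero_of_mem_of_neg_mem (by rwa [neg_neg] at hpos) hneg
  simpa [hε.ne'] using hεw

end IsProperCone

theorem stmt16 {n : ℕ} {K : Set (Fin n → ℝ)} (hK : IsProperCone K)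
    (A : Matrix (Fin n) (Fin n) ℝ) (hA : ∀ v ∈ K, A.mulVec v ∈ K)
    (hx : ∃ x ∈ interior K, rho A • x - A.mulVec x ∈ K) :
    {v : Fin n → ℝ |
        ((rho A • (1 : Matrix (Fin n) (Fin n) ℝ) - A) ^ 2).mulVec v = 0} =
      {v : Fin n → ℝ |
        (rho A • (1 : Matrix (Fin n) (Fin n) ℝ) - A).mulVec v = 0} := by
  obtain ⟨x, hx, hxr⟩ := hx
  exact hK.ker_sq_eq_ker hA hx hxr
end
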